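/- Let Γ ⊂ ℂ be a quasismooth Jordan curve. There is a constant c = c(Γ) > 0 such that δ(2s) ≤ c δ(s) for all 0 < s < diam Γ. -/

import Mathlib

/-!
Let `ζ₂ ∈ Γ_{δ(2s)}` realise the distance `2s` to a point `z ∈ Γ`, so that the disc
`B(ζ₂, 2s)` lies in `Ω`. Walking from `ζ₂` to `z`, `|Φ|` drops from `1 + δ(2s)` to values close
to `1`, because `Φ⁻¹` is continuous and hence `Φ` is proper; so the segment meets `Γ_{δ(s)}`,
and since `Γ_{δ(s)}` stays at distance `s` from `z` it does so at a point `ζ₁` with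
`|ζ₁ - ζ₂| ≤ s`. The Schwarz–Pick lemma for `1/Φ` on `B(ζ₂, 2s)` bounds the pseudo-hyperbolic
distance of `1/Φ(ζ₁)` and `1/Φ(ζ₂)` by `1/2`, which yields `δ(2s) / (1 + δ(2s)) ≤ 16/3 · δ(s)`.
Finally `Φ` is bounded on bounded parts of `Ω`, so `1 + δ(2s)` is bounded for `s < diam Γ`.
-/

open MeasureTheory Metric Set Filter Bornology Complex
open scoped ENNReal NNReal Topology

noncomputable section

/-- `Γ` is a Jordan curve: the image of an injective continuous map of the unit circle. -/
def IsJordanCurve (Γ : Set ℂ) : Prop :=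
  ∃ γ : ℂ → ℂ, ContinuousOn γ (Metric.sphere (0:ℂ) 1) ∧
    Set.InjOn γ (Metric.sphere (0:ℂ) 1) ∧ Γ = γ '' (Metric.sphere (0:ℂ) 1)

/-- A (closed) subarc of `Γ`: a closed connected subset. -/
def IsSubarc (Γ J : Set ℂ) : Prop :=
  J ⊆ Γ ∧ IsClosed J ∧ IsPreconnected J

/-- `|Γ(z₁,z₂)|`: the length (1-dimensional Hausdorff measure) of the shorter subarc of `Γ`
joining `z₁` and `z₂`, described as the infimum of lengths of closed connected subsets of `Γ`
containing both points. -/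
def shorterArcLength (Γ : Set ℂ) (z₁ z₂ : ℂ) : ℝ≥0∞ :=
  ⨅ (J : Set ℂ) (_ : IsSubarc Γ J ∧ z₁ ∈ J ∧ z₂ ∈ J), μH[1] J

/-- `J` is (a realization of) the shorter arc `Γ(z₁,z₂)` of `Γ` between `z₁` and `z₂`. -/
def IsShorterArc (Γ : Set ℂ) (z₁ z₂ : ℂ) (J : Set ℂ) : Prop :=
  IsSubarc Γ J ∧ z₁ ∈ J ∧ z₂ ∈ J ∧ μH[1] J = shorterArcLength Γ z₁ z₂

/-- `Γ` is quasismooth (in the sense of Lavrentiev) with constant `Λ ≥ 1`: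
`|Γ(z₁,z₂)| ≤ Λ |z₁ - z₂|`. -/
def IsQuasismooth (Γ : Set ℂ) (Λ : ℝ) : Prop :=
  1 ≤ Λ ∧ ∀ z₁ ∈ Γ, ∀ z₂ ∈ Γ,
    shorterArcLength Γ z₁ z₂ ≤ ENNReal.ofReal (Λ * dist z₁ z₂)

/-- The union of the unbounded connected components of `Γᶜ`; for a Jordan curve `Γ` this is
the (unique) unbounded component `Ω` of the complement of `Γ`. -/
def unboundedComponent (Γ : Set ℂ) : Set ℂ :=
  {z | z ∉ Γ ∧ ¬ Bornology.IsBounded (connectedComponentIn Γᶜ z)}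

/-- `d(A,B) := inf {|z-ζ| : z ∈ A, ζ ∈ B}`. -/
def setDist (A B : Set ℂ) : ℝ := sInf (Set.image2 dist A B)

/-- The exterior `𝔻*` of the closed unit disk (finite part). -/
def extDisk : Set ℂ := {w : ℂ | 1 < ‖w‖}

/-- `Φ` is the conformal (holomorphic bijective) map of `Ω` onto `𝔻* = {|w| > 1}` normalized
by `Φ(∞) = ∞` and `Φ'(∞) := lim_{z→∞} Φ(z)/z > 0`. -/
def IsExtConformal (Ω : Set ℂ) (Φ : ℂ → ℂ) : Prop :=
  DifferentiableOn ℂ Φ Ω ∧ Set.BijOn Φ Ω extDisk ∧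
    ∃ c : ℝ, 0 < c ∧
      Filter.Tendsto (fun z => Φ z / z) (Bornology.cobounded ℂ) (nhds (c : ℂ))

/-- `Φ` additionally extends to a homeomorphism of `closure Ω` onto `{|w| ≥ 1}`. -/
def IsExtConformalClosure (Ω : Set ℂ) (Φ : ℂ → ℂ) : Prop :=
  IsExtConformal Ω Φ ∧ ContinuousOn Φ (closure Ω) ∧
    Set.BijOn Φ (closure Ω) {w : ℂ | 1 ≤ ‖w‖}

/-- The level curve `Γ_δ := {ζ ∈ Ω : |Φ(ζ)| = 1 + δ}`. -/
def levelCurve (Ω : Set ℂ) (Φ : ℂ → ℂ) (δ : ℝ) : Set ℂ :=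
  {ζ ∈ Ω | ‖Φ ζ‖ = 1 + δ}

/-- `ρ_δ(z) := d({z}, Γ_δ)`. -/
def rho (Ω : Set ℂ) (Φ : ℂ → ℂ) (δ : ℝ) (z : ℂ) : ℝ :=
  Metric.infDist z (levelCurve Ω Φ δ)

/-- `ν ∈ A∞(Γ)` with constant `lam ≥ 1`: `ν(J) ≤ lam · ν(S)` for every subarc `J ⊂ Γ` and
every Borel set `S ⊂ J` with `|J| ≤ 2|S|`. -/
def IsAInftyMeasure (Γ : Set ℂ) (ν : MeasureTheory.Measure ℂ) (lam : ℝ) : Prop :=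
  1 ≤ lam ∧ ∀ J S : Set ℂ, IsSubarc Γ J → S ⊆ J → MeasurableSet S →
    μH[1] J ≤ 2 * μH[1] S → ν J ≤ ENNReal.ofReal lam * ν S

lemma isPreconnected_setOf_lt_norm {r : ℝ} (hr : 0 ≤ r) : IsPreconnected {w : ℂ | r < ‖w‖} := by
  have : {w : ℂ | r < ‖w‖} = (fun p : ℝ × ℂ => (p.1 : ℂ) * p.2) '' (Ioi r ×ˢ sphere 0 1) := by
    ext w
    constructor
    · intro hw
      have hw0 : w ≠ 0 := norm_pos_iff.mp (hr.trans_lt hw)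
      refine ⟨(‖w‖, w / ‖w‖), ⟨hw, ?_⟩, ?_⟩
      · simp [hw0]
      · exact mul_div_cancel₀ w (by simpa using hw0)
    · rintro ⟨⟨ρ, u⟩, ⟨hρ, hu⟩, rfl⟩
      simp_all [abs_of_pos (hr.trans_lt hρ)]
  rw [this]
  exact (isPreconnected_Ioi.prod (isConnected_sphere (by simp) 0 zero_le_one).isPreconnected).image
    _ (by fun_prop)

lemma not_isBounded_setOf_lt_norm (r : ℝ) : ¬ IsBounded {w : ℂ | r < ‖w‖} := fun h =>
  NormedSpace.unbounded_univ ℝ ℂ <| ((isBounded_closedBall (x := 0) (r := r)).union h).subset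
    fun w _ => by simpa using le_or_gt ‖w‖ r

section UnboundedComponent

variable {Γ : Set ℂ}

lemma connectedComponentIn_subset_unboundedComponent {z : ℂ} (hz : z ∈ unboundedComponent Γ) :
    connectedComponentIn Γᶜ z ⊆ unboundedComponent Γ := fun _ hw =>
  ⟨connectedComponentIn_subset _ _ hw, connectedComponentIn_eq hw ▸ hz.2⟩

lemma IsPreconnected.subset_unboundedComponent {S : Set ℂ} (hS : IsPreconnected S)
    (hSΓ : Disjoint S Γ) {z : ℂ} (hzS : z ∈ S) (hz : z ∈ unboundedComponent Γ) :
    S ⊆ unboundedComponent Γ :=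
  (hS.subset_connectedComponentIn hzS hSΓ.subset_compl_right).trans
    (connectedComponentIn_subset_unboundedComponent hz)

lemma isOpen_unboundedComponent (hΓ : IsClosed Γ) : IsOpen (unboundedComponent Γ) :=
  isOpen_iff_forall_mem_open.mpr fun _ hz =>
    ⟨_, connectedComponentIn_subset_unboundedComponent hz,
      hΓ.isOpen_compl.connectedComponentIn, mem_connectedComponentIn hz.1⟩

lemma mem_unboundedComponent_of_lt_norm {r : ℝ} (hr : 0 ≤ r) (hΓ : Γ ⊆ closedBall 0 r) {z : ℂ}
    (hz : r < ‖z‖) : z ∈ unboundedComponent Γ := by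
  have hsub : {w : ℂ | r < ‖w‖} ⊆ Γᶜ := fun w hw hwΓ => by
    simpa using (mem_closedBall_zero_iff.mp (hΓ hwΓ)).trans_lt hw
  exact ⟨hsub hz, fun h => not_isBounded_setOf_lt_norm r
    (h.subset ((isPreconnected_setOf_lt_norm hr).subset_connectedComponentIn hz hsub))⟩

end UnboundedComponent

lemma AnalyticOnNhd.isOpen_image_of_injOn {f : ℂ → ℂ} {U : Set ℂ} (hf : AnalyticOnNhd ℂ f U)
    (hU : IsOpen U) (hinj : InjOn f U) {s : Set ℂ} (hsU : s ⊆ U) (hs : IsOpen s) :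
    IsOpen (f '' s) := by
  refine isOpen_iff_mem_nhds.mpr ?_
  rintro _ ⟨z, hz, rfl⟩
  rcases (hf z (hsU hz)).eventually_constant_or_nhds_le_map_nhds with hconst | hnhds
  · obtain ⟨w, ⟨hwf, hwU⟩, hwz⟩ := ((eventually_nhdsWithin_of_eventually_nhds
      (hconst.and (hU.mem_nhds (hsU hz)))).and (self_mem_nhdsWithin (s := {z}ᶜ))).exists
    exact absurd (hinj hwU (hsU hz) hwf) hwz
  · exact hnhds (image_mem_map (hs.mem_nhds hz))

lemma continuousOn_invFunOn_of_isOpen_image {X Y : Type*} [TopologicalSpace X]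
    [TopologicalSpace Y] [Nonempty X] {f : X → Y} {s : Set X} {t : Set Y} (hf : BijOn f s t)
    (hs : IsOpen s) (hopen : ∀ u ⊆ s, IsOpen u → IsOpen (f '' u)) :
    ContinuousOn (Function.invFunOn f s) t := by
  refine continuousOn_iff'.mpr fun u hu => ⟨f '' (u ∩ s), hopen _ inter_subset_right
    (hu.inter hs), ?_⟩
  ext w
  constructor
  · rintro ⟨hwu, hwt⟩
    exact ⟨⟨_, ⟨hwu, hf.surjOn.mapsTo_invFunOn hwt⟩, hf.surjOn.rightInvOn_invFunOn hwt⟩, hwt⟩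
  · rintro ⟨⟨z, ⟨hzu, hzs⟩, rfl⟩, hwt⟩
    exact ⟨by rwa [mem_preimage, hf.injOn.leftInvOn_invFunOn hzs], hwt⟩

section SetDist

variable {A B : Set ℂ}

lemma setDist_le_dist {z ζ : ℂ} (hz : z ∈ A) (hζ : ζ ∈ B) : setDist A B ≤ dist z ζ :=
  csInf_le ⟨0, by rintro _ ⟨_, _, _, _, rfl⟩; exact dist_nonneg⟩ (mem_image2_of_mem hz hζ)

lemma exists_dist_eq_setDist (hA : IsCompact A) (hB : IsCompact B) (hA' : A.Nonempty)
    (hB' : B.Nonempty) : ∃ z ∈ A, ∃ ζ ∈ B, dist z ζ = setDist A B := by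
  have hcomp : IsCompact (image2 dist A B) := by
    rw [← image_uncurry_prod]
    exact (hA.prod hB).image continuous_dist
  obtain ⟨z, hz, ζ, hζ, h⟩ := hcomp.sInf_mem (hA'.image2 hB')
  exact ⟨z, hz, ζ, hζ, h⟩

end SetDist

section ExteriorMap

variable {Γ : Set ℂ} {Φ : ℂ → ℂ}

lemma IsExtConformal.tendsto_cobounded {Ω : Set ℂ} (hΦ : IsExtConformal Ω Φ) :
    Tendsto Φ (cobounded ℂ) (cobounded ℂ) := by
  obtain ⟨c, hc, hlim⟩ := hΦ.2.2
  rw [← tendsto_norm_atTop_iff_cobounded]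
  refine (hlim.norm.pos_mul_atTop (by simpa using hc.ne') tendsto_norm_cobounded_atTop).congr' ?_
  filter_upwards [eventually_cobounded_le_norm 1] with z hz
  rw [← norm_mul, div_mul_cancel₀ _ (norm_pos_iff.mp (one_pos.trans_le hz))]

lemma IsExtConformal.continuousOn_invFunOn (hΓ : IsClosed Γ)
    (hΦ : IsExtConformal (unboundedComponent Γ) Φ) :
    ContinuousOn (Function.invFunOn Φ (unboundedComponent Γ)) extDisk :=
  have hΩ := isOpen_unboundedComponent hΓ
  continuousOn_invFunOn_of_isOpen_image hΦ.2.1 hΩ fun _ hs hso =>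
    (hΦ.1.analyticOnNhd hΩ).isOpen_image_of_injOn hΩ hΦ.2.1.injOn hs hso

/-- `Φ⁻¹` maps the neighbourhood `{M < |w|}` of `∞` to a connected set that misses a large circle
and reaches outside it, hence stays outside it. -/
lemma IsExtConformal.isBounded_image_inter (hΓ : IsCompact Γ)
    (hΦ : IsExtConformal (unboundedComponent Γ) Φ) {S : Set ℂ} (hS : IsBounded S) :
    IsBounded (Φ '' (unboundedComponent Γ ∩ S)) := by
  set Ψ := Function.invFunOn Φ (unboundedComponent Γ)
  obtain ⟨r, hr0, hr⟩ : ∃ r, 0 ≤ r ∧ Γ ∪ S ⊆ closedBall 0 r := by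
    obtain ⟨r, hr⟩ := (hΓ.isBounded.union hS).subset_closedBall 0
    exact ⟨max r 0, le_max_right _ _, hr.trans (closedBall_subset_closedBall (le_max_left _ _))⟩
  have hsphere : sphere (0 : ℂ) (r + 1) ⊆ unboundedComponent Γ := fun z hz =>
    mem_unboundedComponent_of_lt_norm hr0 (subset_union_left.trans hr)
      (by rw [mem_sphere_zero_iff_norm.mp hz]; linarith)
  obtain ⟨M', hM'⟩ := ((isCompact_sphere 0 (r + 1)).image_of_continuousOn
    (hΦ.1.continuousOn.mono hsphere)).isBounded.subset_closedBall 0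
  set M := max M' 1
  have hM : {w : ℂ | M < ‖w‖} ⊆ extDisk := fun w hw => (le_max_right M' 1).trans_lt hw
  have hfar : Ψ '' {w : ℂ | M < ‖w‖} ⊆ {z | r + 1 < ‖z‖} := by
    refine ((isPreconnected_setOf_lt_norm (zero_le_one.trans (le_max_right _ _))).image _
      ((hΦ.continuousOn_invFunOn hΓ.isClosed).mono hM)).subset_left_of_subset_union
      (isOpen_lt continuous_const continuous_norm) (isOpen_lt continuous_norm continuous_const)
      (disjoint_left.mpr fun _ (h₁ : r + 1 < _) h₂ => lt_asymm h₁ h₂) ?_ ?_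
    · rintro _ ⟨w, hw, rfl⟩
      rcases lt_trichotomy ‖Ψ w‖ (r + 1) with h | h | h
      · exact Or.inr h
      · have hΦΨ : Φ (Ψ w) = w := hΦ.2.1.surjOn.rightInvOn_invFunOn (hM hw)
        have := hM' ⟨Ψ w, mem_sphere_zero_iff_norm.mpr h, hΦΨ⟩
        exact absurd hw (not_lt.mpr ((mem_closedBall_zero_iff.mp this).trans (le_max_left _ _)))
      · exact Or.inl h
    · obtain ⟨z, hzΦ, hz⟩ := ((hΦ.tendsto_cobounded.eventually
        (eventually_cobounded_le_norm (M + 1))).and (eventually_cobounded_le_norm (r + 2))).exists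
      have hzΩ : z ∈ unboundedComponent Γ :=
        mem_unboundedComponent_of_lt_norm hr0 (subset_union_left.trans hr) (by linarith)
      exact ⟨z, ⟨Φ z, by simp only [mem_ofPred_eq]; linarith,
        hΦ.2.1.injOn.leftInvOn_invFunOn hzΩ⟩, by simp only [mem_ofPred_eq]; linarith⟩
  refine (isBounded_closedBall (x := 0) (r := M)).subset ?_
  rintro _ ⟨ζ, ⟨hζΩ, hζS⟩, rfl⟩
  by_contra hζ
  have hζfar : r + 1 < ‖ζ‖ := hfar ⟨Φ ζ, by simpa using hζ, hΦ.2.1.injOn.leftInvOn_invFunOn hζΩ⟩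
  linarith [mem_closedBall_zero_iff.mp (hr (subset_union_right hζS))]

lemma sphere_one_add_subset_extDisk {δ : ℝ} (hδ : 0 < δ) : sphere (0 : ℂ) (1 + δ) ⊆ extDisk :=
  fun w hw => by simp only [extDisk, mem_ofPred_eq, mem_sphere_zero_iff_norm.mp hw]; linarith

lemma levelCurve_eq_image {Ω : Set ℂ} (hΦ : BijOn Φ Ω extDisk) {δ : ℝ} (hδ : 0 < δ) :
    levelCurve Ω Φ δ = Function.invFunOn Φ Ω '' sphere 0 (1 + δ) := by
  have hsub := sphere_one_add_subset_extDisk hδ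
  ext ζ
  constructor
  · rintro ⟨hζ, hζδ⟩
    exact ⟨Φ ζ, mem_sphere_zero_iff_norm.mpr hζδ, hΦ.injOn.leftInvOn_invFunOn hζ⟩
  · rintro ⟨w, hw, rfl⟩
    exact ⟨hΦ.surjOn.mapsTo_invFunOn (hsub hw), by
      rw [hΦ.surjOn.rightInvOn_invFunOn (hsub hw), mem_sphere_zero_iff_norm.mp hw]⟩

lemma IsExtConformal.isCompact_levelCurve (hΓ : IsClosed Γ)
    (hΦ : IsExtConformal (unboundedComponent Γ) Φ) {δ : ℝ} (hδ : 0 < δ) :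
    IsCompact (levelCurve (unboundedComponent Γ) Φ δ) := by
  rw [levelCurve_eq_image hΦ.2.1 hδ]
  exact (isCompact_sphere 0 (1 + δ)).image_of_continuousOn
    ((hΦ.continuousOn_invFunOn hΓ).mono (sphere_one_add_subset_extDisk hδ))

lemma levelCurve_nonempty {Ω : Set ℂ} (hΦ : SurjOn Φ Ω extDisk) {δ : ℝ} (hδ : 0 < δ) :
    (levelCurve Ω Φ δ).Nonempty := by
  have h1δ : ‖((1 + δ : ℝ) : ℂ)‖ = 1 + δ := by
    rw [Complex.norm_real, Real.norm_of_nonneg (by linarith)]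
  obtain ⟨ζ, hζ, hΦζ⟩ := hΦ (show ((1 + δ : ℝ) : ℂ) ∈ extDisk by
    simp only [extDisk, mem_ofPred_eq, h1δ]; linarith)
  exact ⟨ζ, hζ, by rw [hΦζ, h1δ]⟩

lemma IsExtConformal.eventually_norm_lt (hΓ : IsCompact Γ)
    (hΦ : IsExtConformal (unboundedComponent Γ) Φ) {z : ℂ} (hz : z ∉ unboundedComponent Γ)
    {r : ℝ} (hr : 1 < r) : ∀ᶠ ζ in 𝓝[unboundedComponent Γ] z, ‖Φ ζ‖ < r := by
  obtain ⟨M, hM⟩ :=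
    (hΦ.isBounded_image_inter hΓ (isBounded_ball (x := z) (r := 1))).subset_closedBall 0
  set A := {w : ℂ | r ≤ ‖w‖} ∩ closedBall 0 M
  have hA : A ⊆ extDisk := fun w hw => hr.trans_le hw.1
  have hK : IsCompact (Function.invFunOn Φ (unboundedComponent Γ) '' A) :=
    ((isCompact_closedBall 0 M).inter_left (isClosed_le continuous_const continuous_norm)
      ).image_of_continuousOn ((hΦ.continuousOn_invFunOn hΓ.isClosed).mono hA)
  have hzK : z ∉ Function.invFunOn Φ (unboundedComponent Γ) '' A := fun ⟨w, hw, hwz⟩ =>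
    hz (hwz ▸ hΦ.2.1.surjOn.mapsTo_invFunOn (hA hw))
  filter_upwards [self_mem_nhdsWithin, nhdsWithin_le_nhds (ball_mem_nhds z one_pos),
    nhdsWithin_le_nhds (hK.isClosed.isOpen_compl.mem_nhds hzK)] with ζ hζΩ hζz hζK
  by_contra hζr
  exact hζK ⟨Φ ζ, ⟨not_lt.mp hζr, hM ⟨ζ, ⟨hζΩ, hζz⟩, rfl⟩⟩, hΦ.2.1.injOn.leftInvOn_invFunOn hζΩ⟩

lemma IsExtConformal.exists_one_add_le_of_setDist_le (hΓ : IsCompact Γ) (hΓne : Γ.Nonempty)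
    (hΦ : IsExtConformal (unboundedComponent Γ) Φ) (T : ℝ) :
    ∃ K, ∀ δ, 0 < δ → setDist Γ (levelCurve (unboundedComponent Γ) Φ δ) ≤ T → 1 + δ ≤ K := by
  obtain ⟨K, hK⟩ :=
    (hΦ.isBounded_image_inter hΓ (hΓ.isBounded.cthickening (δ := T))).subset_closedBall 0
  refine ⟨K, fun δ hδ hT => ?_⟩
  obtain ⟨z, hz, ζ, hζ, hzζ⟩ := exists_dist_eq_setDist hΓ (hΦ.isCompact_levelCurve hΓ.isClosed hδ)
    hΓne (levelCurve_nonempty hΦ.2.1.surjOn hδ)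
  have := hK ⟨ζ, ⟨hζ.1, mem_cthickening_of_dist_le ζ z T Γ hz (by rw [dist_comm]; linarith)⟩, rfl⟩
  rwa [mem_closedBall_zero_iff, hζ.2] at this

lemma IsExtConformal.exists_lineMap_mem_levelCurve (hΓ : IsCompact Γ)
    (hΦ : IsExtConformal (unboundedComponent Γ) Φ) {ζ z : ℂ} (hz : z ∉ unboundedComponent Γ)
    (hseg : ∀ t ∈ Ico (0 : ℝ) 1, AffineMap.lineMap (k := ℝ) ζ z t ∈ unboundedComponent Γ)
    {δ : ℝ} (hδ : 0 < δ) (hζ : 1 + δ ≤ ‖Φ ζ‖) :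
    ∃ t ∈ Ico (0 : ℝ) 1,
      AffineMap.lineMap (k := ℝ) ζ z t ∈ levelCurve (unboundedComponent Γ) Φ δ := by
  set σ : ℝ → ℂ := fun t => AffineMap.lineMap ζ z t
  have hσ : Tendsto σ (𝓝[<] 1) (𝓝[unboundedComponent Γ] z) := by
    refine tendsto_nhdsWithin_iff.mpr ⟨?_, ?_⟩
    · simpa [σ] using (AffineMap.lineMap_continuous.tendsto (1 : ℝ)).mono_left nhdsWithin_le_nhds
    · filter_upwards [Ioo_mem_nhdsLT zero_lt_one] with t ht using hseg t (Ioo_subset_Ico_self ht)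
  have hlt : ∀ᶠ t in 𝓝[<] 1, ‖Φ (σ t)‖ < 1 + δ :=
    hσ.eventually (hΦ.eventually_norm_lt hΓ hz (by linarith))
  obtain ⟨τ, hτΦ, hτ⟩ := (hlt.and (Ioo_mem_nhdsLT zero_lt_one)).exists
  have hσΩ : ∀ t ∈ Icc 0 τ, σ t ∈ unboundedComponent Γ :=
    fun t ht => hseg t ⟨ht.1, ht.2.trans_lt hτ.2⟩
  have hcont : ContinuousOn (fun t => ‖Φ (σ t)‖) (Icc 0 τ) :=
    continuous_norm.comp_continuousOn
      (hΦ.1.continuousOn.comp AffineMap.lineMap_continuous.continuousOn hσΩ)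
  obtain ⟨t, ht, hσt⟩ := intermediate_value_Icc' hτ.1.le hcont ⟨hτΦ.le, by simpa [σ] using hζ⟩
  exact ⟨t, ⟨ht.1, ht.2.trans_lt hτ.2⟩, hσΩ t ht, hσt⟩

lemma IsExtConformal.exists_mem_levelCurve_dist_le (hΓ : IsCompact Γ)
    (hΦ : IsExtConformal (unboundedComponent Γ) Φ) {ζ z : ℂ} {s δ : ℝ} (hs : 0 < s) (hz : z ∈ Γ)
    (hzζ : dist z ζ = 2 * s) (hball : ball ζ (2 * s) ⊆ unboundedComponent Γ) (hδ : 0 < δ)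
    (hζ : 1 + δ ≤ ‖Φ ζ‖) (hsd : setDist Γ (levelCurve (unboundedComponent Γ) Φ δ) = s) :
    ∃ ζ' ∈ levelCurve (unboundedComponent Γ) Φ δ, dist ζ' ζ ≤ s := by
  have hdist : ∀ t : ℝ, 0 ≤ t → dist (AffineMap.lineMap ζ z t) ζ = t * (2 * s) := fun t ht => by
    rw [dist_lineMap_left, Real.norm_of_nonneg ht, dist_comm, hzζ]
  obtain ⟨t, ht, hζ'⟩ := hΦ.exists_lineMap_mem_levelCurve hΓ (fun hzΩ => hzΩ.1 hz)
    (fun t ht => hball (mem_ball.mpr (by rw [hdist t ht.1]; nlinarith [ht.2]))) hδ hζ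
  have hzζ' : s ≤ (1 - t) * (2 * s) := by
    have := setDist_le_dist hz hζ'
    rwa [hsd, dist_comm, dist_lineMap_right, Real.norm_of_nonneg (by linarith [ht.2]),
      dist_comm, hzζ] at this
  exact ⟨_, hζ', by rw [hdist t ht.1]; nlinarith⟩

end ExteriorMap

section PseudoHyperbolic

open ComplexConjugate

def pseudoHyperbolicDist (a b : ℂ) : ℝ := ‖(b - a) / (1 - conj a * b)‖

lemma sq_norm_one_sub_conj_mul_sub_sq_norm_sub (a b : ℂ) :
    ‖1 - conj a * b‖ ^ 2 - ‖b - a‖ ^ 2 = (1 - ‖a‖ ^ 2) * (1 - ‖b‖ ^ 2) := by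
  simp only [← Complex.normSq_eq_norm_sq, Complex.normSq_apply]
  simp only [Complex.sub_re, Complex.sub_im, Complex.mul_re, Complex.mul_im, Complex.conj_re,
    Complex.conj_im, Complex.one_re, Complex.one_im]
  ring

lemma norm_sub_lt_norm_one_sub_conj_mul {a b : ℂ} (ha : ‖a‖ < 1) (hb : ‖b‖ < 1) :
    ‖b - a‖ < ‖1 - conj a * b‖ := by
  have := sq_norm_one_sub_conj_mul_sub_sq_norm_sub a b
  have : 0 < (1 - ‖a‖ ^ 2) * (1 - ‖b‖ ^ 2) := by
    apply mul_pos <;> nlinarith [norm_nonneg a, norm_nonneg b]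
  exact lt_of_pow_lt_pow_left₀ 2 (norm_nonneg _) (by linarith)

lemma pseudoHyperbolicDist_lt_one {a b : ℂ} (ha : ‖a‖ < 1) (hb : ‖b‖ < 1) :
    pseudoHyperbolicDist a b < 1 := by
  have h := norm_sub_lt_norm_one_sub_conj_mul ha hb
  rw [pseudoHyperbolicDist, norm_div, div_lt_one ((norm_nonneg _).trans_lt h)]
  exact h

/-- The Schwarz–Pick lemma, in pseudo-hyperbolic form. -/
lemma pseudoHyperbolicDist_le_of_mapsTo_ball {f : ℂ → ℂ} {c z : ℂ} {R : ℝ}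
    (hd : DifferentiableOn ℂ f (ball c R)) (hf : MapsTo f (ball c R) (ball 0 1))
    (hz : z ∈ ball c R) : pseudoHyperbolicDist (f c) (f z) ≤ dist z c / R := by
  have hc : c ∈ ball c R := mem_ball_self (dist_nonneg.trans_lt hz)
  have hfc : ‖f c‖ < 1 := mem_ball_zero_iff.mp (hf hc)
  have hden : ∀ w ∈ ball c R, 1 - conj (f c) * f w ≠ 0 := fun w hw =>
    norm_pos_iff.mp ((norm_nonneg _).trans_lt
      (norm_sub_lt_norm_one_sub_conj_mul hfc (mem_ball_zero_iff.mp (hf hw))))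
  set g : ℂ → ℂ := fun w => (f w - f c) / (1 - conj (f c) * f w)
  have hgc : g c = 0 := by simp [g]
  have hg : DifferentiableOn ℂ g (ball c R) :=
    (hd.sub_const _).div ((hd.const_mul _).const_sub _) hden
  have hmaps : MapsTo g (ball c R) (closedBall (g c) 1) := fun w hw => by
    rw [hgc, mem_closedBall_zero_iff]
    exact (pseudoHyperbolicDist_lt_one hfc (mem_ball_zero_iff.mp (hf hw))).le
  have := Complex.dist_le_div_mul_dist_of_mapsTo_ball hg hmaps hz
  rwa [hgc, dist_zero_right, one_div_mul_eq_div] at this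

lemma three_eighths_mul_one_sub_norm_le_of_pseudoHyperbolicDist_le_half {a b : ℂ} (ha : ‖a‖ < 1)
    (hb : ‖b‖ < 1) (h : pseudoHyperbolicDist a b ≤ 1 / 2) : 3 / 8 * (1 - ‖a‖) ≤ 1 - ‖b‖ ^ 2 := by
  have hden := norm_sub_lt_norm_one_sub_conj_mul ha hb
  have hN : ‖b - a‖ ≤ 1 / 2 * ‖1 - conj a * b‖ := by
    rw [pseudoHyperbolicDist, norm_div, div_le_iff₀ ((norm_nonneg _).trans_lt hden)] at h
    linarith
  have hE : 1 - ‖a‖ ≤ ‖1 - conj a * b‖ := by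
    have := norm_sub_norm_le (1 : ℂ) (conj a * b)
    rw [norm_one, norm_mul, Complex.norm_conj] at this
    nlinarith [norm_nonneg a, norm_nonneg b]
  have hE2 : 3 / 4 * (1 - ‖a‖) ^ 2 ≤ (1 - ‖a‖ ^ 2) * (1 - ‖b‖ ^ 2) := by
    rw [← sq_norm_one_sub_conj_mul_sub_sq_norm_sub]
    nlinarith [norm_nonneg (b - a)]
  have ha2 : (1 - ‖a‖ ^ 2) * (1 - ‖b‖ ^ 2) ≤ 2 * (1 - ‖a‖) * (1 - ‖b‖ ^ 2) := by
    nlinarith [norm_nonneg a, norm_nonneg b]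
  nlinarith

lemma three_eighths_mul_one_sub_inv_norm_le_of_dist_le_half {f : ℂ → ℂ} {c z : ℂ} {R : ℝ}
    (hR : 0 < R) (hd : DifferentiableOn ℂ f (ball c R)) (hf : ∀ w ∈ ball c R, 1 < ‖f w‖)
    (hz : dist z c ≤ R / 2) : 3 / 8 * (1 - ‖f c‖⁻¹) ≤ 1 - ‖f z‖⁻¹ ^ 2 := by
  have hf0 : ∀ w ∈ ball c R, f w ≠ 0 := fun w hw => norm_pos_iff.mp (one_pos.trans (hf w hw))
  have hmaps : MapsTo (fun w => (f w)⁻¹) (ball c R) (ball 0 1) := fun w hw => by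
    rw [mem_ball_zero_iff, norm_inv]
    exact inv_lt_one_of_one_lt₀ (hf w hw)
  have hzR : z ∈ ball c R := mem_ball.mpr (by linarith)
  have hcR : c ∈ ball c R := mem_ball_self hR
  have hρ := (pseudoHyperbolicDist_le_of_mapsTo_ball (hd.inv hf0) hmaps hzR).trans
    ((div_le_iff₀ hR).mpr (by linarith) : dist z c / R ≤ 1 / 2)
  simpa only [norm_inv] using three_eighths_mul_one_sub_norm_le_of_pseudoHyperbolicDist_le_half
    (mem_ball_zero_iff.mp (hmaps hcR)) (mem_ball_zero_iff.mp (hmaps hzR)) hρ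

end PseudoHyperbolic

lemma le_mul_of_three_eighths_mul_one_sub_inv_le {δ₁ δ₂ K : ℝ} (hδ₁ : 0 < δ₁) (hδ₂ : 0 < δ₂)
    (hK : 1 + δ₂ ≤ K) (h : 3 / 8 * (1 - (1 + δ₂)⁻¹) ≤ 1 - (1 + δ₁)⁻¹ ^ 2) :
    δ₂ ≤ 16 * K / 3 * δ₁ := by
  have h₁ : 1 - (1 + δ₁)⁻¹ ^ 2 ≤ 2 * δ₁ := by
    have hy : 1 - (1 + δ₁)⁻¹ = δ₁ / (1 + δ₁) := by field_simp; ring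
    have : δ₁ / (1 + δ₁) ≤ δ₁ := div_le_self hδ₁.le (by linarith)
    nlinarith [sq_nonneg (1 - (1 + δ₁)⁻¹)]
  have h₂ : δ₂ / (1 + δ₂) ≤ 16 / 3 * δ₁ := by
    have : 1 - (1 + δ₂)⁻¹ = δ₂ / (1 + δ₂) := by field_simp; ring
    linarith
  rw [div_le_iff₀ (by linarith)] at h₂
  nlinarith

lemma IsJordanCurve.isCompact {Γ : Set ℂ} (hΓ : IsJordanCurve Γ) : IsCompact Γ := by
  obtain ⟨γ, hγ, -, rfl⟩ := hΓ
  exact (isCompact_sphere 0 1).image_of_continuousOn hγ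

lemma IsJordanCurve.nonempty {Γ : Set ℂ} (hΓ : IsJordanCurve Γ) : Γ.Nonempty := by
  obtain ⟨γ, -, -, rfl⟩ := hΓ
  exact (NormedSpace.sphere_nonempty.mpr zero_le_one).image γ

theorem delta_doubling_general
    (Γ : Set ℂ) (hΓJ : IsJordanCurve Γ)
    (Φ : ℂ → ℂ) (hΦ : IsExtConformal (unboundedComponent Γ) Φ) :
    ∃ c > (0:ℝ), ∀ s δ₁ δ₂ : ℝ,
      0 < s → s < Metric.diam Γ →
      0 < δ₁ → setDist Γ (levelCurve (unboundedComponent Γ) Φ δ₁) = s →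
      0 < δ₂ → setDist Γ (levelCurve (unboundedComponent Γ) Φ δ₂) = 2 * s →
      δ₂ ≤ c * δ₁ := by
  have hΓ := hΓJ.isCompact
  obtain ⟨K, hK⟩ := hΦ.exists_one_add_le_of_setDist_le hΓ hΓJ.nonempty (2 * diam Γ)
  refine ⟨max 1 (16 * K / 3), one_pos.trans_le (le_max_left _ _),
    fun s δ₁ δ₂ hs hsD hδ₁ hd₁ hδ₂ hd₂ => ?_⟩
  rcases le_total δ₂ δ₁ with h | h
  · nlinarith [le_max_left 1 (16 * K / 3)]
  obtain ⟨z, hz, ζ₂, hζ₂, hzζ₂⟩ := exists_dist_eq_setDist hΓ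
    (hΦ.isCompact_levelCurve hΓ.isClosed hδ₂) hΓJ.nonempty (levelCurve_nonempty hΦ.2.1.surjOn hδ₂)
  rw [hd₂] at hzζ₂
  have hball : ball ζ₂ (2 * s) ⊆ unboundedComponent Γ :=
    (convex_ball _ _).isPreconnected.subset_unboundedComponent
      (disjoint_left.mpr fun w hw hwΓ => (mem_ball.mp hw).not_ge (hd₂ ▸ setDist_le_dist hwΓ hζ₂))
      (mem_ball_self (by linarith)) hζ₂.1
  obtain ⟨ζ₁, hζ₁, hζ₁ζ₂⟩ := hΦ.exists_mem_levelCurve_dist_le hΓ hs hz hzζ₂ hball hδ₁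
    (by rw [hζ₂.2]; linarith) hd₁
  have hharnack := three_eighths_mul_one_sub_inv_norm_le_of_dist_le_half (by linarith)
    (hΦ.1.mono hball) (fun w hw => hΦ.2.1.mapsTo (hball hw)) (by linarith : dist ζ₁ ζ₂ ≤ 2 * s / 2)
  rw [hζ₁.2, hζ₂.2] at hharnack
  exact (le_mul_of_three_eighths_mul_one_sub_inv_le hδ₁ hδ₂ (hK δ₂ hδ₂ (by linarith))
    hharnack).trans (mul_le_mul_of_nonneg_right (le_max_right _ _) hδ₁.le)

/-- (3.2n): there is `c = c(Γ) > 0` with `δ(2s) ≤ c δ(s)` for all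
`0 < s < diam Γ`; here `δ(t)` is any positive number with `d(Γ, Γ_{δ(t)}) = t`. -/
theorem delta_doubling
    (Γ : Set ℂ) (Λ : ℝ) (hΓJ : IsJordanCurve Γ) (hΓq : IsQuasismooth Γ Λ)
    (Φ : ℂ → ℂ) (hΦ : IsExtConformal (unboundedComponent Γ) Φ) :
    ∃ c > (0:ℝ), ∀ s δ₁ δ₂ : ℝ,
      0 < s → s < Metric.diam Γ →
      0 < δ₁ → setDist Γ (levelCurve (unboundedComponent Γ) Φ δ₁) = s →
      0 < δ₂ → setDist Γ (levelCurve (unboundedComponent Γ) Φ δ₂) = 2 * s →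
      δ₂ ≤ c * δ₁ :=
  delta_doubling_general Γ hΓJ Φ hΦ
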